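/- arXiv:1511.04846 — 8 statements merged into one kernel-verified Lean document; each statement's English description precedes it below -/
import Mathlib

section
/- Safe replacement for the deep short-circuiting binary-search-tree checker: for every binary tree n and all bounds lo, hi, hlo, hhi in α, if bst n hlo hhi holds, then bstsc n lo hi hlo hhi implies bst n lo hi. -/
inductive BTree (α : Type*) where
  | nil : BTree α
  | node : α → BTree α → BTree α → BTree α

variable {α : Type*} [LinearOrder α]

def bst : BTree α → α → α → Prop
  | .nil, _, _ => True
  | .node v l r, lo, hi => lo ≤ v ∧ v < hi ∧ bst l lo v ∧ bst r v hi

def bstsc : BTree α → α → α → α → α → Prop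
  | n, lo, hi, hlo, hhi =>
    if lo = hlo ∧ hi = hhi then True
    else
      match n with
      | .nil => True
      | .node v l r => lo ≤ v ∧ v < hi ∧ bstsc l lo v hlo v ∧ bstsc r v hi v hhi

theorem bstsc_safe_replacement (n : BTree α) (lo hi hlo hhi : α)
    (h : bst n hlo hhi) : bstsc n lo hi hlo hhi → bst n lo hi := by
  induction n generalizing lo hi hlo hhi with
  | nil => intro _; trivial
  | node v l r ihl ihr =>
    intro hsc
    rw [bstsc] at hsc
    split at hsc
    · obtain ⟨rfl, rfl⟩ := ‹lo = hlo ∧ hi = hhi›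
      exact h
    · obtain ⟨h1, h2, h3, h4⟩ := h
      obtain ⟨g1, g2, g3, g4⟩ := hsc
      exact ⟨g1, g2, ihl lo v hlo v h3 g3, ihr v hi v hhi h4 g4⟩
end

section
/- Completeness (no false alarms) of the deep short-circuiting binary-search-tree checker: for every binary tree n and all bounds lo, hi, hlo, hhi in α, if bst n hlo hhi and bst n lo hi both hold, then bstsc n lo hi hlo hhi holds. -/
variable {α : Type*} [LinearOrder α]

theorem bstsc_complete (n : BTree α) (lo hi hlo hhi : α)
    (h1 : bst n hlo hhi) (h2 : bst n lo hi) : bstsc n lo hi hlo hhi := by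
  induction n generalizing lo hi hlo hhi with
  | nil => unfold bstsc; split <;> trivial
  | node v l r ihl ihr =>
    obtain ⟨_, _, hl1, hr1⟩ := h1
    obtain ⟨_, _, hl2, hr2⟩ := h2
    unfold bstsc
    split
    · trivial
    · exact ⟨‹_›, ‹_›, ihl _ _ _ _ hl1 hl2, ihr _ _ _ _ hr1 hr2⟩
end

section
/- Short-circuiting makes validation traverse at most one spine: for every binary tree n and all bounds lo, hi, hlo, hhi in α, (i) if lo = hlo then cost n lo hi hlo hhi ≤ 2 * height n + 1, and (ii) if hi = hhi then cost n lo hi hlo hhi ≤ 2 * height n + 1. -/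
variable {α : Type*} [LinearOrder α]

def cost : BTree α → α → α → α → α → ℕ
  | n, lo, hi, hlo, hhi =>
    if lo = hlo ∧ hi = hhi then 1
    else
      match n with
      | .nil => 1
      | .node v l r => 1 + cost l lo v hlo v + cost r v hi v hhi

def height {α : Type*} : BTree α → ℕ
  | .nil => 0
  | .node _ l r => 1 + max (height l) (height r)

theorem cost_spine (n : BTree α) (lo hi hlo hhi : α) :
    (lo = hlo → cost n lo hi hlo hhi ≤ 2 * height n + 1) ∧
    (hi = hhi → cost n lo hi hlo hhi ≤ 2 * height n + 1) := by
  induction n generalizing lo hi hlo hhi with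
  | nil =>
    constructor <;> intro h <;> rw [cost] <;> split <;> simp [height]
  | node v l r ihl ihr =>
    constructor <;> intro h <;> rw [cost] <;> split
    · simp
    · have h1 : cost l lo v hlo v = 1 := by rw [cost.eq_def]; simp [h]
      have h2 : cost r v hi v hhi ≤ 2 * height r + 1 := (ihr v hi v hhi).1 rfl
      simp only [height]
      omega
    · simp
    · have h1 : cost l lo v hlo v ≤ 2 * height l + 1 := (ihl lo v hlo v).2 rfl
      have h2 : cost r v hi v hhi = 1 := by rw [cost.eq_def]; simp [h]
      simp only [height]
      omega
end

section
/- Soundness of the synthesized short-circuiting validation of setroot: for all values v, ov in α, all binary trees l, r, and all bounds lo, hi in α, if bst (node ov l r) lo hi holds (the binary search tree before the root value is changed from ov to v), and the synthesized checks lo ≤ v, v < hi, bstsc l lo v lo ov and bstsc r v hi ov hi all hold, then bst (node v l r) lo hi holds. -/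
variable {α : Type*} [LinearOrder α]

theorem bstsc_sound : ∀ (t : BTree α) (lo hi hlo hhi : α),
    bst t hlo hhi → bstsc t lo hi hlo hhi → bst t lo hi
  | .nil, lo, hi, hlo, hhi, _, _ => trivial
  | .node w ll lr, lo, hi, hlo, hhi, hb, hc => by
    rw [bstsc] at hc
    split at hc
    · obtain ⟨h1, h2⟩ := ‹lo = hlo ∧ hi = hhi›
      subst h1; subst h2; exact hb
    · obtain ⟨c1, c2, c3, c4⟩ := hc
      obtain ⟨b1, b2, b3, b4⟩ := hb
      exact ⟨c1, c2, bstsc_sound ll lo w hlo w b3 c3,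
        bstsc_sound lr w hi w hhi b4 c4⟩

theorem setroot_sound (v ov : α) (l r : BTree α) (lo hi : α)
    (h : bst (BTree.node ov l r) lo hi)
    (h1 : lo ≤ v) (h2 : v < hi)
    (h3 : bstsc l lo v lo ov) (h4 : bstsc r v hi ov hi) :
    bst (BTree.node v l r) lo hi := by
  obtain ⟨b1, b2, b3, b4⟩ := h
  exact ⟨h1, h2, bstsc_sound l lo v lo ov b3 h3,
    bstsc_sound r v hi ov hi b4 h4⟩
end

section
/- Completeness of the synthesized short-circuiting validation of setroot: for all values v, ov in α, all binary trees l, r, and all bounds lo, hi in α, if bst (node ov l r) lo hi and bst (node v l r) lo hi both hold, then lo ≤ v, v < hi, bstsc l lo v lo ov and bstsc r v hi ov hi all hold. -/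
variable {α : Type*} [LinearOrder α]

theorem bst_bstsc (t : BTree α) : ∀ lo hi hlo hhi : α, bst t lo hi → bstsc t lo hi hlo hhi := by
  induction t with
  | nil =>
    intro lo hi hlo hhi _
    rw [bstsc]
    split <;> trivial
  | node v l r ihl ihr =>
    intro lo hi hlo hhi h
    obtain ⟨h1, h2, h3, h4⟩ := h
    rw [bstsc]
    split
    · trivial
    · exact ⟨h1, h2, ihl lo v hlo v h3, ihr v hi v hhi h4⟩

theorem setroot_complete (v ov : α) (l r : BTree α) (lo hi : α)
    (h : bst (BTree.node ov l r) lo hi)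
    (h' : bst (BTree.node v l r) lo hi) :
    lo ≤ v ∧ v < hi ∧ bstsc l lo v lo ov ∧ bstsc r v hi ov hi := by
  obtain ⟨_, _, hl, hr⟩ := h'
  exact ⟨‹_›, ‹_›, bst_bstsc l lo v lo ov hl, bst_bstsc r v hi ov hi hr⟩
end

section
/- The synthesized short-circuiting validation of setroot performs a number of checker calls at most linear in the tree's height: for all values v, ov in α, all binary trees l, r, and all bounds lo, hi in α, cost l lo v lo ov + cost r v hi ov hi ≤ 2 * (height l + height r) + 2. -/
variable {α : Type*} [LinearOrder α]

lemma cost_nil (lo hi hlo hhi : α) :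
    cost (BTree.nil) lo hi hlo hhi = 1 := by
  rw [cost.eq_def]; split <;> simp

lemma cost_node (v : α) (l r : BTree α) (lo hi hlo hhi : α) :
    cost (BTree.node v l r) lo hi hlo hhi =
      if lo = hlo ∧ hi = hhi then 1 else 1 + cost l lo v hlo v + cost r v hi v hhi := by
  rw [cost.eq_def]

lemma cost_both (n : BTree α) (lo hi : α) : cost n lo hi lo hi = 1 := by
  rw [cost.eq_def]; simp

lemma cost_left (n : BTree α) (lo hi hhi : α) :
    cost n lo hi lo hhi ≤ 2 * height n + 1 := by
  induction n generalizing lo hi hhi with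
  | nil => simp [cost_nil]
  | node v l r ihl ihr =>
    rw [cost_node]
    split
    · simp
    · have := ihr v hi hhi
      simp only [cost_both, height] at *
      omega

lemma cost_right (n : BTree α) (lo hi hlo : α) :
    cost n lo hi hlo hi ≤ 2 * height n + 1 := by
  induction n generalizing lo hi hlo with
  | nil => simp [cost_nil]
  | node v l r ihl ihr =>
    rw [cost_node]
    split
    · simp
    · have := ihl lo v hlo
      simp only [cost_both, height] at *
      omega

theorem setroot_cost (v ov : α) (l r : BTree α) (lo hi : α) :
    cost l lo v lo ov + cost r v hi ov hi ≤ 2 * (height l + height r) + 2 := by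
  have h1 := cost_left l lo v ov
  have h2 := cost_right r v hi ov
  omega
end

section
/- A bst-segment realizes the separating implication: for every one-hole context c, every binary tree s, and all bounds lo, hi, elo, ehi in α, if bstSeg c lo hi elo ehi and bst s elo ehi both hold, then bst (fill c s) lo hi holds. -/
variable {α : Type*} [LinearOrder α]

inductive Ctx (α : Type*) where
  | hole : Ctx α
  | nodeL : α → Ctx α → BTree α → Ctx α
  | nodeR : α → BTree α → Ctx α → Ctx α

def fill {α : Type*} : Ctx α → BTree α → BTree α
  | .hole, s => s
  | .nodeL v c r, s => .node v (fill c s) r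
  | .nodeR v l c, s => .node v l (fill c s)

def bstSeg : Ctx α → α → α → α → α → Prop
  | .hole, lo, hi, elo, ehi => lo = elo ∧ hi = ehi
  | .nodeL v c r, lo, hi, elo, ehi => lo ≤ v ∧ v < hi ∧ bstSeg c lo v elo ehi ∧ bst r v hi
  | .nodeR v l c, lo, hi, elo, ehi => lo ≤ v ∧ v < hi ∧ bst l lo v ∧ bstSeg c v hi elo ehi

theorem bstSeg_fill (c : Ctx α) (s : BTree α) (lo hi elo ehi : α)
    (hseg : bstSeg c lo hi elo ehi) (hs : bst s elo ehi) :
    bst (fill c s) lo hi := by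
  induction c generalizing lo hi with
  | hole => obtain ⟨rfl, rfl⟩ := hseg; exact hs
  | nodeL v c r ih =>
    obtain ⟨h1, h2, h3, h4⟩ := hseg
    exact ⟨h1, h2, ih _ _ h3, h4⟩
  | nodeR v l c ih =>
    obtain ⟨h1, h2, h3, h4⟩ := hseg
    exact ⟨h1, h2, h3, ih _ _ h4⟩
end

section
/- Safe replacement for the short-circuiting hash-trie checker holds for an arbitrary hash-path function: for every function hb : K → ℕ → ℕ, every hash trie t, and all natural numbers level, path, hlevel, hpath, if hashtrie t hlevel hpath holds, then htsc t level path hlevel hpath implies hashtrie t level path. -/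
inductive Trie (K V : Type*) where
  | nil : Trie K V
  | node : K → V → (Fin 4 → Trie K V) → Trie K V

variable {K V : Type*}

def hashtrie (hb : K → ℕ → ℕ) : Trie K V → ℕ → ℕ → Prop
  | .nil, _, _ => True
  | .node k _ c, level, path =>
      hb k level = path ∧ ∀ i : Fin 4, hashtrie hb (c i) (level + 1) (4 * path + (i : ℕ))

def htsc (hb : K → ℕ → ℕ) : Trie K V → ℕ → ℕ → ℕ → ℕ → Prop
  | t, level, path, hlevel, hpath =>
    if level = hlevel ∧ path = hpath then True
    else
      match t with
      | .nil => True
      | .node k _ c => hb k level = path ∧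
          ∀ i : Fin 4, htsc hb (c i) (level + 1) (4 * path + (i : ℕ)) (hlevel + 1) (4 * hpath + (i : ℕ))

theorem htsc_safe_replacement (hb : K → ℕ → ℕ) (t : Trie K V)
    (level path hlevel hpath : ℕ)
    (h : hashtrie hb t hlevel hpath) :
    htsc hb t level path hlevel hpath → hashtrie hb t level path := by
  induction t generalizing level path hlevel hpath with
  | nil => intro _; trivial
  | node k v c ih =>
    intro hs
    rw [htsc] at hs
    by_cases hc : level = hlevel ∧ path = hpath
    · obtain ⟨h1, h2⟩ := hc; subst h1; subst h2; exact h
    · rw [if_neg hc] at hs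
      exact ⟨hs.1, fun i => ih i _ _ _ _ (h.2 i) (hs.2 i)⟩
end
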